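/- The extended dihedral angle functions α_ij : ℝ⁶ → [0,π] are continuous on ℝ⁶; they satisfy α_ij(l) = α_kh(l) for every partition {i,j,k,h} = {1,2,3,4} into opposite edges, and for each vertex index i ∈ {1,2,3,4} the three angles at edges through vᵢ sum to π: α_ij(l) + α_ik(l) + α_ih(l) = π for all l ∈ ℝ⁶. -/

import Mathlib

noncomputable section

open Real Set Filter

/-- The generalized Euclidean triangle angle `aᵢ(x)` opposite the side of length `x i`,
for a generalized triangle with (positive) side lengths `x 0, x 1, x 2`:
it is `π` if `x i ≥ x j + x k`, `0` if some other side is at least the sum of the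
remaining two, and otherwise the usual Euclidean angle `arccos((xⱼ²+x_k²−xᵢ²)/(2xⱼx_k))`. -/
noncomputable def genAngle (x : Fin 3 → ℝ) (i : Fin 3) : ℝ :=
  if x (i + 1) + x (i + 2) ≤ x i then Real.pi
  else if x i + x (i + 2) ≤ x (i + 1) ∨ x i + x (i + 1) ≤ x (i + 2) then 0
  else Real.arccos
    ((x (i + 1) ^ 2 + x (i + 2) ^ 2 - x i ^ 2) / (2 * x (i + 1) * x (i + 2)))

/-- The three side lengths `e^{(l₁₂+l₃₄)/2}, e^{(l₁₃+l₂₄)/2}, e^{(l₁₄+l₂₃)/2}` of the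
generalized Euclidean triangle associated to a length vector `l ∈ ℝ⁶`.
Edge indices: `0 ↔ {1,2}, 1 ↔ {1,3}, 2 ↔ {1,4}, 3 ↔ {2,3}, 4 ↔ {2,4}, 5 ↔ {3,4}`,
so opposite pairs of edges are `(0,5), (1,4), (2,3)`. -/
noncomputable def triSides (l : Fin 6 → ℝ) (k : Fin 3) : ℝ :=
  if k.val = 0 then Real.exp ((l 0 + l 5) / 2)
  else if k.val = 1 then Real.exp ((l 1 + l 4) / 2)
  else Real.exp ((l 2 + l 3) / 2)

/-- The quad (pair of opposite edges) containing the edge `p`. -/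
def quadIndex (p : Fin 6) : Fin 3 :=
  if p.val = 0 ∨ p.val = 5 then 0 else if p.val = 1 ∨ p.val = 4 then 1 else 2

/-- The extended dihedral angle `α_p(l)` of the generalized decorated tetrahedron with
length vector `l ∈ ℝ⁶` at the edge `p`. -/
noncomputable def dihedral (l : Fin 6 → ℝ) (p : Fin 6) : ℝ :=
  genAngle (triSides l) (quadIndex p)

/-- The edge index in `Fin 6` of the edge `{i,j}` of the tetrahedron on vertices `Fin 4`
(junk value for `i = j`). -/
def edgeOf (i j : Fin 4) : Fin 6 :=
  if (i.val = 0 ∧ j.val = 1) ∨ (i.val = 1 ∧ j.val = 0) then 0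
  else if (i.val = 0 ∧ j.val = 2) ∨ (i.val = 2 ∧ j.val = 0) then 1
  else if (i.val = 0 ∧ j.val = 3) ∨ (i.val = 3 ∧ j.val = 0) then 2
  else if (i.val = 1 ∧ j.val = 2) ∨ (i.val = 2 ∧ j.val = 1) then 3
  else if (i.val = 1 ∧ j.val = 3) ∨ (i.val = 3 ∧ j.val = 1) then 4
  else 5

/-- The two endpoints of the edge `p` of the tetrahedron. -/
def endPts (p : Fin 6) : Fin 4 × Fin 4 :=
  if p.val = 0 then (0, 1) else if p.val = 1 then (0, 2) else if p.val = 2 then (0, 3)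
  else if p.val = 3 then (1, 2) else if p.val = 4 then (1, 3) else (2, 3)

/-- The Lobachevsky function `Λ(x) = −∫₀ˣ ln|2 sin t| dt`. -/
noncomputable def lob (x : ℝ) : ℝ := -∫ t in (0:ℝ)..x, Real.log |2 * Real.sin t|

/-- The volume of the generalized decorated tetrahedron with length vector `l`. -/
noncomputable def vol6 (l : Fin 6 → ℝ) : ℝ := (1 / 2 : ℝ) * ∑ p : Fin 6, lob (dihedral l p)

/-- The co-volume function `cov(l) = 2 vol(l) + Σ α_p(l) l_p` on `ℝ⁶`. -/
noncomputable def cov6 (l : Fin 6 → ℝ) : ℝ := 2 * vol6 l + ∑ p : Fin 6, dihedral l p * l p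

/-- `𝓛 ⊂ ℝ⁶`: length vectors of genuine decorated ideal hyperbolic tetrahedra, i.e. those
whose associated generalized Euclidean triangle satisfies the strict triangle inequalities. -/
def Ldom : Set (Fin 6 → ℝ) :=
  {l | ∀ i : Fin 3, triSides l i < triSides l (i + 1) + triSides l (i + 2)}

/-- The action of `w ∈ ℝ⁴` on `l ∈ ℝ⁶`: `(w + l)_{ij} = l_{ij} + wᵢ + wⱼ`. -/
def act (w : Fin 4 → ℝ) (l : Fin 6 → ℝ) : Fin 6 → ℝ :=
  fun p => l p + w (endPts p).1 + w (endPts p).2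

/-- `ℝ̂⁴ = {w + 0 : w ∈ ℝ⁴} ⊂ ℝ⁶`. -/
def hatR4 : Set (Fin 6 → ℝ) := {x | ∃ w : Fin 4 → ℝ, x = act w 0}

/-- `i, j, k, h` are pairwise distinct, i.e. `{i,j,k,h} = {1,2,3,4}`. -/
def Distinct4 (i j k h : Fin 4) : Prop :=
  i ≠ j ∧ i ≠ k ∧ i ≠ h ∧ j ≠ k ∧ j ≠ h ∧ k ≠ h

/-! For positive sides the case distinction in `genAngle` is exactly the clamping of `arccos`
to `[-1, 1]`, so every `dihedral l p` is the arccos of a continuous function of `l`. Opposite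
edges index the same side of the triangle, while the three edges at a vertex index its three
sides; the vertex sum is therefore the angle sum of a generalized triangle, which is `π` both
for a genuine triangle and in the degenerate case, where the angles are `π, 0, 0`. -/

lemma Fin.add_add_eq_sum_univ_three {M : Type*} [AddCommMonoid M] (f : Fin 3 → M) {a b c : Fin 3}
    (hab : a ≠ b) (hac : a ≠ c) (hbc : b ≠ c) : f a + f b + f c = ∑ i, f i := by
  rw [Fin.sum_univ_three]
  fin_cases a <;> fin_cases b <;> fin_cases c <;> simp_all <;> abel

lemma arccos_add_arccos_add_arccos_eq_pi {A B C : ℝ} (hA : A ∈ Icc (-1) 1)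
    (hB : B ∈ Icc (-1) 1) (hAB : -B < A) (hC : 0 ≤ C + A * B)
    (hsq : (1 - A ^ 2) * (1 - B ^ 2) = (C + A * B) ^ 2) :
    arccos A + arccos B + arccos C = π := by
  have hcos : cos (π - (arccos A + arccos B)) = C := by
    rw [cos_pi_sub, cos_add, sin_arccos, sin_arccos, cos_arccos hA.1 hA.2,
      cos_arccos hB.1 hB.2, ← sqrt_mul (by nlinarith [hA.1, hA.2]), hsq, sqrt_sq hC]
    ring
  have hlt : arccos A < π - arccos B := by
    rw [← arccos_neg]
    exact strictAntiOn_arccos ⟨by linarith [hB.2], by linarith [hB.1]⟩ hA hAB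
  have hB0 := arccos_nonneg B
  have hA0 := arccos_nonneg A
  rw [← hcos, arccos_cos (by linarith) (by linarith)]
  ring

lemma arccos_add_arccos_add_arccos_of_triangle {a b c : ℝ} (ha : 0 < a) (hb : 0 < b)
    (hc : 0 < c) (h1 : a < b + c) (h2 : b < c + a) (h3 : c < a + b) :
    arccos ((b ^ 2 + c ^ 2 - a ^ 2) / (2 * b * c))
      + arccos ((c ^ 2 + a ^ 2 - b ^ 2) / (2 * c * a))
      + arccos ((a ^ 2 + b ^ 2 - c ^ 2) / (2 * a * b)) = π := by
  have hbc : 0 < 2 * b * c := by positivity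
  have hca : 0 < 2 * c * a := by positivity
  apply arccos_add_arccos_add_arccos_eq_pi
  · rw [mem_Icc, le_div_iff₀ hbc, div_le_iff₀ hbc]; constructor <;> nlinarith
  · rw [mem_Icc, le_div_iff₀ hca, div_le_iff₀ hca]; constructor <;> nlinarith
  · rw [← neg_div, div_lt_div_iff₀ hca hbc]
    nlinarith [mul_pos (mul_pos hc (add_pos ha hb))
      (show 0 < c ^ 2 - (a - b) ^ 2 by nlinarith)]
  · -- `C + A B` factors through Heron's product `((a+b)² - c²)(c² - (a-b)²)`.
    have heron : (a ^ 2 + b ^ 2 - c ^ 2) / (2 * a * b)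
        + (b ^ 2 + c ^ 2 - a ^ 2) / (2 * b * c) * ((c ^ 2 + a ^ 2 - b ^ 2) / (2 * c * a))
        = ((a + b) ^ 2 - c ^ 2) * (c ^ 2 - (a - b) ^ 2) / (4 * a * b * c ^ 2) := by
      field_simp
      ring
    have hpos : 0 < ((a + b) ^ 2 - c ^ 2) * (c ^ 2 - (a - b) ^ 2) := by
      apply mul_pos <;> nlinarith
    rw [heron]
    positivity
  · field_simp
    ring

lemma genAngle_eq_arccos {x : Fin 3 → ℝ} (hx : ∀ i, 0 < x i) (i : Fin 3) :
    genAngle x i =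
      arccos ((x (i + 1) ^ 2 + x (i + 2) ^ 2 - x i ^ 2) / (2 * x (i + 1) * x (i + 2))) := by
  have := hx i; have := hx (i + 1); have := hx (i + 2)
  have hd : 0 < 2 * x (i + 1) * x (i + 2) := by positivity
  unfold genAngle
  split_ifs with _ hzero
  · rw [eq_comm, arccos_eq_pi, div_le_iff₀ hd]
    nlinarith
  · rw [eq_comm, arccos_eq_zero, le_div_iff₀ hd]
    rcases hzero with h | h <;> nlinarith
  · rfl

lemma genAngle_mem_Icc (x : Fin 3 → ℝ) (i : Fin 3) : genAngle x i ∈ Icc 0 π := by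
  unfold genAngle
  split_ifs
  · exact ⟨pi_nonneg, le_rfl⟩
  · exact ⟨le_rfl, pi_nonneg⟩
  · exact ⟨arccos_nonneg _, arccos_le_pi _⟩

lemma continuousOn_genAngle (i : Fin 3) :
    ContinuousOn (fun x : Fin 3 → ℝ => genAngle x i) {x | ∀ j, 0 < x j} := by
  refine ContinuousOn.congr ?_ fun x hx => genAngle_eq_arccos hx i
  refine continuous_arccos.comp_continuousOn (ContinuousOn.div (by fun_prop) (by fun_prop) ?_)
  intro x hx
  have := hx (i + 1); have := hx (i + 2)
  positivity

lemma genAngle_eq_zero_of_degenerate {x : Fin 3 → ℝ} (hx : ∀ i, 0 < x i) {i : Fin 3}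
    (hdeg : x (i + 1) + x (i + 2) ≤ x i) : genAngle x (i + 1) = 0 ∧ genAngle x (i + 2) = 0 := by
  have := hx i; have := hx (i + 1); have := hx (i + 2)
  have e1 : i + 1 + 1 = i + 2 := by fin_cases i <;> rfl
  have e2 : i + 1 + 2 = i := by fin_cases i <;> rfl
  have e3 : i + 2 + 1 = i := by fin_cases i <;> rfl
  have e4 : i + 2 + 2 = i + 1 := by fin_cases i <;> rfl
  simp only [genAngle, e1, e2, e3, e4]
  constructor
  · rw [if_neg (by linarith), if_pos (Or.inr (by linarith))]
  · rw [if_neg (by linarith), if_pos (Or.inl (by linarith))]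

lemma sum_genAngle {x : Fin 3 → ℝ} (hx : ∀ i, 0 < x i) : ∑ i, genAngle x i = π := by
  by_cases hdeg : ∃ i, x (i + 1) + x (i + 2) ≤ x i
  · obtain ⟨i, hi⟩ := hdeg
    obtain ⟨h1, h2⟩ := genAngle_eq_zero_of_degenerate hx hi
    rw [← Fin.add_add_eq_sum_univ_three (genAngle x) (a := i) (b := i + 1) (c := i + 2)
      (by fin_cases i <;> decide) (by fin_cases i <;> decide) (by fin_cases i <;> decide),
      h1, h2, genAngle, if_pos hi, add_zero, add_zero]
  · simp only [not_exists, not_le] at hdeg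
    rw [Fin.sum_univ_three, genAngle_eq_arccos hx, genAngle_eq_arccos hx,
      genAngle_eq_arccos hx]
    exact arccos_add_arccos_add_arccos_of_triangle (hx 0) (hx 1) (hx 2) (hdeg 0) (hdeg 1)
      (hdeg 2)

lemma triSides_pos (l : Fin 6 → ℝ) (k : Fin 3) : 0 < triSides l k := by
  unfold triSides
  split_ifs <;> exact exp_pos _

lemma continuous_triSides : Continuous triSides := by
  refine continuous_pi fun k => ?_
  unfold triSides
  split_ifs <;> fun_prop

lemma quadIndex_edgeOf_eq_of_opposite {i j k h : Fin 4} (hd : Distinct4 i j k h) :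
    quadIndex (edgeOf i j) = quadIndex (edgeOf k h) := by
  revert i j k h
  unfold Distinct4
  decide

lemma quadIndex_edgeOf_pairwise_ne {i j k h : Fin 4} (hd : Distinct4 i j k h) :
    quadIndex (edgeOf i j) ≠ quadIndex (edgeOf i k)
      ∧ quadIndex (edgeOf i j) ≠ quadIndex (edgeOf i h)
      ∧ quadIndex (edgeOf i k) ≠ quadIndex (edgeOf i h) := by
  revert i j k h
  unfold Distinct4
  decide

/-- the extended dihedral angles are continuous on `ℝ⁶`, take values in
`[0,π]`, agree on opposite edges, and sum to `π` over the three edges at each vertex. -/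
theorem dihedral_continuous_opposite_vertexSum :
    (∀ p : Fin 6, Continuous fun l : Fin 6 → ℝ => dihedral l p) ∧
    (∀ (l : Fin 6 → ℝ) (p : Fin 6), dihedral l p ∈ Set.Icc 0 Real.pi) ∧
    (∀ (l : Fin 6 → ℝ) (i j k h : Fin 4), Distinct4 i j k h →
      dihedral l (edgeOf i j) = dihedral l (edgeOf k h)) ∧
    (∀ (l : Fin 6 → ℝ) (i j k h : Fin 4), Distinct4 i j k h →
      dihedral l (edgeOf i j) + dihedral l (edgeOf i k) + dihedral l (edgeOf i h)
        = Real.pi) := by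
  refine ⟨fun p => ?_, fun l p => genAngle_mem_Icc _ _, fun l i j k h hd => ?_,
    fun l i j k h hd => ?_⟩
  · exact (continuousOn_genAngle _).comp_continuous continuous_triSides (triSides_pos ·)
  · unfold dihedral
    rw [quadIndex_edgeOf_eq_of_opposite hd]
  · obtain ⟨hjk, hjh, hkh⟩ := quadIndex_edgeOf_pairwise_ne hd
    unfold dihedral
    rw [Fin.add_add_eq_sum_univ_three (genAngle (triSides l)) hjk hjh hkh,
      sum_genAngle (triSides_pos l)]
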